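/- arXiv:1711.09918 — 2 statements merged into one kernel-verified Lean document; each statement's English description precedes it below -/
import Mathlib

section
/- Expected jump of the optimal cost-to-go under an exposure event: with f̂ = (α + N^f)/(α + β + N^e), for all M ∈ {0,1}, nonnegative integers N^f ≤ N^e, N^p, and λ ∈ ℝ, f̂ r · J(M, N^e+1, N^f+1, N^p, λ+γ) + f̂ (1−r) · J(M, N^e+1, N^f+1, N^p, λ) + (1−f̂) r · J(M, N^e+1, N^f, N^p, λ+γ) + (1−f̂)(1−r) · J(M, N^e+1, N^f, N^p, λ) − J(M, N^e, N^f, N^p, λ) = √q · ω · c(N^f, N^e). (This evaluates the first bracket of the HJB equation (11) for the candidate J of Lemma 2.) -/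
/-- The posterior coefficient `c(Nᶠ, Nᵉ) = p₀ + (p₁ - p₀)(α + Nᶠ)/(α + β + Nᵉ)`. -/
noncomputable def cpost (α β p₀ p₁ : ℝ) (Nf Ne : ℕ) : ℝ :=
  p₀ + (p₁ - p₀) * ((α + Nf) / (α + β + Ne))

/-- The candidate optimal cost-to-go of Lemma 2:
`J(M, Nᵉ, Nᶠ, Nᵖ, λ) = √q ⋅ c(Nᶠ, Nᵉ) ⋅ (λ - γ Nᵖ - (γ r - ω)(α + β + Nᵉ))`
(it does not depend on `M`). -/
noncomputable def costJ (q γ ω r α β p₀ p₁ : ℝ) (M : ℝ) (Ne Nf Np : ℕ) (lam : ℝ) : ℝ :=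
  Real.sqrt q * cpost α β p₀ p₁ Nf Ne
    * (lam - γ * Np - (γ * r - ω) * (α + β + Ne))

/-- Expected jump of the optimal cost-to-go under an exposure event: evaluating
the first bracket of the HJB equation (11) at the candidate `J` of Lemma 2
yields `√q ⋅ ω ⋅ c(Nᶠ, Nᵉ)`. -/
theorem expected_jump_cost_to_go
    (q γ ω r α β p₀ p₁ : ℝ)
    (hq : 0 < q) (hγ : 0 < γ) (hω : 0 < ω) (hr0 : 0 ≤ r) (hr1 : r ≤ 1)
    (hα : 0 < α) (hβ : 0 < β)
    (hp₀ : p₀ ∈ Set.Icc (0:ℝ) 1) (hp₁ : p₁ ∈ Set.Icc (0:ℝ) 1)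
    (M : ℝ) (hM : M = 0 ∨ M = 1)
    (Nf Ne Np : ℕ) (hNfNe : Nf ≤ Ne) (lam : ℝ) :
    let fhat : ℝ := (α + Nf) / (α + β + Ne)
    fhat * r * costJ q γ ω r α β p₀ p₁ M (Ne + 1) (Nf + 1) Np (lam + γ)
      + fhat * (1 - r) * costJ q γ ω r α β p₀ p₁ M (Ne + 1) (Nf + 1) Np lam
      + (1 - fhat) * r * costJ q γ ω r α β p₀ p₁ M (Ne + 1) Nf Np (lam + γ)
      + (1 - fhat) * (1 - r) * costJ q γ ω r α β p₀ p₁ M (Ne + 1) Nf Np lam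
      - costJ q γ ω r α β p₀ p₁ M Ne Nf Np lam
    = Real.sqrt q * ω * cpost α β p₀ p₁ Nf Ne := by
  intro fhat
  have hD : (0:ℝ) < α + β + Ne := by positivity
  have hD1 : (0:ℝ) < α + β + (Ne + 1 : ℕ) := by positivity
  simp only [costJ, cpost, fhat]
  push_cast
  field_simp
  ring
end

section
/- Lemma 2 (the candidate cost-to-go satisfies the Hamilton–Jacobi–Bellman equation (11)): with f̂ = (α + N^f)/(α + β + N^e) and Δ = J(0, N^e, N^f, N^p, λ) − J(1, N^e, N^f, N^p, 0), for all nonnegative integers N^f ≤ N^e, N^p, all λ ≥ 0 and all h ≥ 0 (the exogenous post rate), the following identity holds: [ f̂ r J(0, N^e+1, N^f+1, N^p, λ+γ) + f̂(1−r) J(0, N^e+1, N^f+1, N^p, λ) + (1−f̂) r J(0, N^e+1, N^f, N^p, λ+γ) + (1−f̂)(1−r) J(0, N^e+1, N^f, N^p, λ) − J(0, N^e, N^f, N^p, λ) ] · λ + [ J(0, N^e, N^f, N^p+1, λ+γ) − J(0, N^e, N^f, N^p, λ) ] · h + inf_{u ≥ 0} { ½ c(N^f, N^e)² λ² + ½ q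 u² − ω λ √q c(N^f, N^e) − Δ u } = 0, where the term −ω λ √q c(N^f, N^e) equals −ω λ ∂J/∂λ and ∂J/∂t = 0. Moreover, for M = 1 (verified story, so λ = 0 and the control term is suppressed), the corresponding equation also holds, each term being zero. -/
set_option maxHeartbeats 1600000 in
/-- Lemma 2: the candidate cost-to-go satisfies the Hamilton–Jacobi–Bellman
equation (11).  For `M = 0`, the exposure bracket times `λ`, plus the exogenous
bracket times the post rate `h`, plus the infimum over `u ≥ 0` of
`½ c² λ² + ½ q u² - ω λ √q c - Δ u` equals zero, where
`Δ = J(0, …, λ) - J(1, …, 0)`.  Moreover, for `M = 1` (verified story, so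
`λ = 0` and the control term is suppressed) the corresponding equation also
holds, each term being zero. -/
theorem candidate_cost_to_go_satisfies_HJB
    (q γ ω r α β p₀ p₁ : ℝ)
    (hq : 0 < q) (hγ : 0 < γ) (hω : 0 < ω) (hr0 : 0 ≤ r) (hr1 : r ≤ 1)
    (hα : 0 < α) (hβ : 0 < β)
    (hp₀ : p₀ ∈ Set.Icc (0:ℝ) 1) (hp₁ : p₁ ∈ Set.Icc (0:ℝ) 1)
    (Nf Ne Np : ℕ) (hNfNe : Nf ≤ Ne)
    (lam : ℝ) (hlam : 0 ≤ lam) (h : ℝ) (hh : 0 ≤ h) :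
    let fhat : ℝ := (α + Nf) / (α + β + Ne)
    let c := cpost α β p₀ p₁ Nf Ne
    let Δ := costJ q γ ω r α β p₀ p₁ 0 Ne Nf Np lam
               - costJ q γ ω r α β p₀ p₁ 1 Ne Nf Np 0
    ((fhat * r * costJ q γ ω r α β p₀ p₁ 0 (Ne + 1) (Nf + 1) Np (lam + γ)
        + fhat * (1 - r) * costJ q γ ω r α β p₀ p₁ 0 (Ne + 1) (Nf + 1) Np lam
        + (1 - fhat) * r * costJ q γ ω r α β p₀ p₁ 0 (Ne + 1) Nf Np (lam + γ)
        + (1 - fhat) * (1 - r) * costJ q γ ω r α β p₀ p₁ 0 (Ne + 1) Nf Np lam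
        - costJ q γ ω r α β p₀ p₁ 0 Ne Nf Np lam) * lam
      + (costJ q γ ω r α β p₀ p₁ 0 Ne Nf (Np + 1) (lam + γ)
          - costJ q γ ω r α β p₀ p₁ 0 Ne Nf Np lam) * h
      + sInf ((fun u : ℝ =>
          (1/2) * c ^ 2 * lam ^ 2 + (1/2) * q * u ^ 2
            - ω * lam * Real.sqrt q * c - Δ * u) '' Set.Ici (0:ℝ)) = 0)
    ∧ ((fhat * r * costJ q γ ω r α β p₀ p₁ 1 (Ne + 1) (Nf + 1) Np (0 + γ)
          + fhat * (1 - r) * costJ q γ ω r α β p₀ p₁ 1 (Ne + 1) (Nf + 1) Np 0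
          + (1 - fhat) * r * costJ q γ ω r α β p₀ p₁ 1 (Ne + 1) Nf Np (0 + γ)
          + (1 - fhat) * (1 - r) * costJ q γ ω r α β p₀ p₁ 1 (Ne + 1) Nf Np 0
          - costJ q γ ω r α β p₀ p₁ 1 Ne Nf Np 0) * (0:ℝ) = 0
        ∧ (costJ q γ ω r α β p₀ p₁ 1 Ne Nf (Np + 1) (0 + γ)
            - costJ q γ ω r α β p₀ p₁ 1 Ne Nf Np 0) * (((1:ℝ) - 1) * h) = 0
        ∧ (1/2) * c ^ 2 * (0:ℝ) ^ 2 - ω * (0:ℝ) * Real.sqrt q * c = 0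
        ∧ (fhat * r * costJ q γ ω r α β p₀ p₁ 1 (Ne + 1) (Nf + 1) Np (0 + γ)
            + fhat * (1 - r) * costJ q γ ω r α β p₀ p₁ 1 (Ne + 1) (Nf + 1) Np 0
            + (1 - fhat) * r * costJ q γ ω r α β p₀ p₁ 1 (Ne + 1) Nf Np (0 + γ)
            + (1 - fhat) * (1 - r) * costJ q γ ω r α β p₀ p₁ 1 (Ne + 1) Nf Np 0
            - costJ q γ ω r α β p₀ p₁ 1 Ne Nf Np 0) * (0:ℝ)
          + (costJ q γ ω r α β p₀ p₁ 1 Ne Nf (Np + 1) (0 + γ)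
              - costJ q γ ω r α β p₀ p₁ 1 Ne Nf Np 0) * (((1:ℝ) - 1) * h)
          + ((1/2) * c ^ 2 * (0:ℝ) ^ 2 - ω * (0:ℝ) * Real.sqrt q * c) = 0) := by
  intro fhat c Δ
  have hD : (0:ℝ) < α + β + Ne := by positivity
  have hNe : ((Ne:ℝ)+1) = ((Ne+1 : ℕ) : ℝ) := by push_cast; ring
  have hD' : (0:ℝ) < α + β + ((Ne+1:ℕ):ℝ) := by
    rw [← hNe]; positivity
  have hfhat0 : 0 ≤ fhat := by
    apply div_nonneg _ hD.le; positivity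
  have hNfNe' : (Nf:ℝ) ≤ (Ne:ℝ) := Nat.cast_le.mpr hNfNe
  have hfhat1 : fhat ≤ 1 := by
    rw [div_le_one hD]; linarith
  have hc0 : 0 ≤ c := by
    have : c = p₀ * (1 - fhat) + p₁ * fhat := by
      simp only [c, cpost, fhat]; ring
    rw [this]
    have := hp₀.1; have := hp₁.1
    nlinarith
  obtain ⟨s, hs, rfl⟩ : ∃ s : ℝ, 0 < s ∧ s * s = q :=
    ⟨Real.sqrt q, Real.sqrt_pos.mpr hq, Real.mul_self_sqrt hq.le⟩
  have hss : Real.sqrt (s * s) = s := Real.sqrt_mul_self hs.le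
  have hΔ : Δ = s * c * lam := by
    simp only [Δ, c, costJ, hss]; ring
  have hΔ0 : 0 ≤ Δ := by
    rw [hΔ]; positivity
  set g : ℝ → ℝ := fun u =>
      (1/2) * c ^ 2 * lam ^ 2 + (1/2) * (s * s) * u ^ 2
        - ω * lam * Real.sqrt (s * s) * c - Δ * u with hg
  have hmin : ∀ u : ℝ, g (Δ/(s*s)) ≤ g u := by
    intro u
    have hdiff : g u - g (Δ/(s*s)) = (1/2) * (s*s) * (u - Δ/(s*s))^2 := by
      simp only [hg]; field_simp; ring
    nlinarith [sq_nonneg (u - Δ/(s*s)), mul_pos hs hs]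
  have hleast : IsLeast (g '' Set.Ici (0:ℝ)) (g (Δ/(s*s))) := by
    constructor
    · exact ⟨Δ/(s*s), div_nonneg hΔ0 hq.le, rfl⟩
    · rintro y ⟨u, -, rfl⟩; exact hmin u
  have hsInf : sInf (g '' Set.Ici (0:ℝ)) = g (Δ/(s*s)) := hleast.csInf_eq
  have hval : g (Δ/(s*s)) = -(ω * lam * s * c) := by
    simp only [hg, hΔ, hss]
    field_simp
    ring
  constructor
  · rw [hsInf, hval]
    simp only [costJ, cpost, fhat, c, hss]
    rw [← hNe]
    have e1 : (α + β + (Ne:ℝ)) ≠ 0 := hD.ne'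
    have e2 : (α + β + ((Ne:ℝ) + 1)) ≠ 0 := by positivity
    push_cast
    field_simp
    ring
  · refine ⟨by ring, by ring, by ring, by ring⟩
end
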